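/- Define γ : (ℝ²)³ → ℝ³ by γ(a₁, a₂, a₃) = (‖a₂ − a₃‖, ‖a₃ − a₁‖, ‖a₁ − a₂‖). Then there is no constant C₁ > 0 such that C₁ · d_{E(2)}(A,B) ≤ d(γ(A), γ(B)) for all triples A, B of points in ℝ²; that is, the side-lengths map γ is not bi-Lipschitz with respect to the orbit distance d_{E(2)}. -/

import Mathlib

open Matrix
open scoped ComplexOrder

/-- Frobenius norm of a real matrix: `‖A‖ = √(trace (A Aᵀ))`. -/
noncomputable def frobR {n l : ℕ} (A : Matrix (Fin n) (Fin l) ℝ) : ℝ :=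
  Real.sqrt (Matrix.trace (A * Aᵀ))

/-- Frobenius norm of a complex matrix: `‖A‖ = √(trace (A Aᴴ))`. -/
noncomputable def frobC {n l : ℕ} (A : Matrix (Fin n) (Fin l) ℂ) : ℝ :=
  Real.sqrt (Matrix.trace (A * Aᴴ)).re

open Classical in
/-- The unique positive semidefinite square root of a positive semidefinite real
symmetric matrix (junk value `0` if `M` is not positive semidefinite). -/
noncomputable def matSqrtR {k : ℕ} (M : Matrix (Fin k) (Fin k) ℝ) : Matrix (Fin k) (Fin k) ℝ :=
  if h : M.PosSemidef then (h.1.eigenvectorUnitary : Matrix (Fin k) (Fin k) ℝ) *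
    Matrix.diagonal (fun i => Real.sqrt (h.1.eigenvalues i)) *
    (star h.1.eigenvectorUnitary : Matrix (Fin k) (Fin k) ℝ) else 0

open Classical in
/-- The unique positive semidefinite square root of a positive semidefinite hermitian
matrix (junk value `0` if `M` is not positive semidefinite). -/
noncomputable def matSqrtC {k : ℕ} (M : Matrix (Fin k) (Fin k) ℂ) : Matrix (Fin k) (Fin k) ℂ :=
  if h : M.PosSemidef then (h.1.eigenvectorUnitary : Matrix (Fin k) (Fin k) ℂ) *
    Matrix.diagonal (fun i => ((Real.sqrt (h.1.eigenvalues i) : ℝ) : ℂ)) *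
    (star h.1.eigenvectorUnitary : Matrix (Fin k) (Fin k) ℂ) else 0

/-- Orbit distance for the orthogonal group `O(n)` acting by left multiplication. -/
noncomputable def dO {n l : ℕ} (A B : Matrix (Fin n) (Fin l) ℝ) : ℝ :=
  sInf {x | ∃ W ∈ Matrix.orthogonalGroup (Fin n) ℝ, x = frobR (W * A - B)}

/-- Orbit distance for the unitary group `U(n)` acting by left multiplication. -/
noncomputable def dU {n l : ℕ} (A B : Matrix (Fin n) (Fin l) ℂ) : ℝ :=
  sInf {x | ∃ W ∈ Matrix.unitaryGroup (Fin n) ℂ, x = frobC (W * A - B)}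

/-- `q𝟙ᵀ` : the `n × l` matrix each of whose columns equals `q` (real case). -/
def colMatR {n l : ℕ} (q : Fin n → ℝ) : Matrix (Fin n) (Fin l) ℝ :=
  Matrix.of fun i _ => q i

/-- `q𝟙ᵀ` : the `n × l` matrix each of whose columns equals `q` (complex case). -/
def colMatC {n l : ℕ} (q : Fin n → ℂ) : Matrix (Fin n) (Fin l) ℂ :=
  Matrix.of fun i _ => q i

/-- Orbit distance for the euclidean group `E(n) = O(n) ⋉ ℝⁿ` acting columnwise. -/
noncomputable def dE {n l : ℕ} (A B : Matrix (Fin n) (Fin l) ℝ) : ℝ :=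
  sInf {x | ∃ P ∈ Matrix.orthogonalGroup (Fin n) ℝ, ∃ q : Fin n → ℝ,
    x = frobR (P * A + colMatR q - B)}

/-- Orbit distance for the complex euclidean group `F(n) = U(n) ⋉ ℂⁿ` acting columnwise. -/
noncomputable def dF {n l : ℕ} (A B : Matrix (Fin n) (Fin l) ℂ) : ℝ :=
  sInf {x | ∃ P ∈ Matrix.unitaryGroup (Fin n) ℂ, ∃ q : Fin n → ℂ,
    x = frobC (P * A + colMatC q - B)}

/-- Column-centering `π` : subtract from each column the average of all columns (real case). -/
noncomputable def centerR {n l : ℕ} (A : Matrix (Fin n) (Fin l) ℝ) : Matrix (Fin n) (Fin l) ℝ :=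
  Matrix.of fun i j => A i j - (∑ k, A i k) / (l : ℝ)

/-- Column-centering `π_ℂ` : subtract from each column the average of all columns (complex case). -/
noncomputable def centerC {n l : ℕ} (A : Matrix (Fin n) (Fin l) ℂ) : Matrix (Fin n) (Fin l) ℂ :=
  Matrix.of fun i j => A i j - (∑ k, A i k) / (l : ℂ)

/-- Euclidean norm of a vector in `ℝⁿ`. -/
noncomputable def eunorm {n : ℕ} (v : Fin n → ℝ) : ℝ := Real.sqrt (∑ i, v i ^ 2)

/-- The side-lengths map `γ(a₁,a₂,a₃) = (‖a₂−a₃‖, ‖a₃−a₁‖, ‖a₁−a₂‖)`. -/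
noncomputable def gammaMap (a : Fin 3 → Fin 2 → ℝ) : Fin 3 → ℝ :=
  ![eunorm (a 1 - a 2), eunorm (a 2 - a 0), eunorm (a 0 - a 1)]

/-- Identify a triple of points in `ℝ²` with a `2×3` matrix whose columns are the points. -/
def toMat (a : Fin 3 → Fin 2 → ℝ) : Matrix (Fin 2) (Fin 3) ℝ :=
  Matrix.of fun i j => a j i


/-! Up to sign, the signed area of a triangle is invariant under `E(2)` and locally Lipschitz,
so a small `d_{E(2)}` forces a small change of the absolute area. Lifting the apex of the flat
triangle `(-1,0), (1,0), (0,0)` to height `h` creates area `h`, hence moves it by `≳ h` in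
`d_{E(2)}`, whereas its side lengths `√(1 + h²), √(1 + h²), 2` change only by `O(h²)`. -/

lemma abs_apply_le_frobR {n l : ℕ} (D : Matrix (Fin n) (Fin l) ℝ) (i : Fin n) (j : Fin l) :
    |D i j| ≤ frobR D := by
  have htrace : (D * Dᵀ).trace = ∑ i, ∑ j, D i j ^ 2 := by
    simp only [trace, diag, mul_apply, transpose_apply, sq]
  rw [← Real.sqrt_sq_eq_abs, frobR, htrace]
  gcongr
  calc D i j ^ 2 ≤ ∑ j', D i j' ^ 2 :=
        Finset.single_le_sum (fun _ _ => sq_nonneg _) (Finset.mem_univ j)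
    _ ≤ ∑ i', ∑ j', D i' j' ^ 2 :=
        Finset.single_le_sum (f := fun i' => ∑ j', D i' j' ^ 2)
          (fun _ _ => Finset.sum_nonneg fun _ _ => sq_nonneg _) (Finset.mem_univ i)

lemma le_dE {n l : ℕ} {A B : Matrix (Fin n) (Fin l) ℝ} {c : ℝ}
    (h : ∀ P ∈ orthogonalGroup (Fin n) ℝ, ∀ q : Fin n → ℝ, c ≤ frobR (P * A + colMatR q - B)) :
    c ≤ dE A B :=
  le_csInf ⟨_, 1, one_mem _, 0, rfl⟩ fun _ ⟨P, hP, q, hx⟩ => hx ▸ h P hP q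

lemma abs_det_of_mem_orthogonalGroup {n : Type*} [Fintype n] [DecidableEq n]
    {P : Matrix n n ℝ} (hP : P ∈ orthogonalGroup n ℝ) : |P.det| = 1 := by
  have h : P.det * P.det = 1 := by
    simpa [det_transpose] using congr_arg det ((mem_orthogonalGroup_iff _ _).mp hP)
  rcases mul_self_eq_one_iff.mp h with h | h <;> simp [h]

/-- Twice the signed area of the triangle whose vertices are the columns of `A`
(shoelace formula). -/
def doubleSignedArea (A : Matrix (Fin 2) (Fin 3) ℝ) : ℝ :=
  ∑ j : Fin 3, (A 0 j * A 1 (j + 1) - A 1 j * A 0 (j + 1))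

lemma doubleSignedArea_add_colMatR (A : Matrix (Fin 2) (Fin 3) ℝ) (q : Fin 2 → ℝ) :
    doubleSignedArea (A + colMatR q) = doubleSignedArea A := by
  simp only [doubleSignedArea, Fin.sum_univ_three, Matrix.add_apply, colMatR, of_apply,
    Fin.reduceAdd]
  ring

lemma doubleSignedArea_mul (P : Matrix (Fin 2) (Fin 2) ℝ) (A : Matrix (Fin 2) (Fin 3) ℝ) :
    doubleSignedArea (P * A) = P.det * doubleSignedArea A := by
  simp only [doubleSignedArea, det_fin_two, mul_apply, Fin.sum_univ_three, Fin.sum_univ_two,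
    Fin.reduceAdd]
  ring

lemma abs_doubleSignedArea_euclidean {P : Matrix (Fin 2) (Fin 2) ℝ}
    (hP : P ∈ orthogonalGroup (Fin 2) ℝ) (A : Matrix (Fin 2) (Fin 3) ℝ) (q : Fin 2 → ℝ) :
    |doubleSignedArea (P * A + colMatR q)| = |doubleSignedArea A| := by
  rw [doubleSignedArea_add_colMatR, doubleSignedArea_mul, abs_mul,
    abs_det_of_mem_orthogonalGroup hP, one_mul]

lemma abs_mul_sub_mul_le {a b c d M r : ℝ} (hac : |a - c| ≤ r) (hbd : |b - d| ≤ r)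
    (hb : |b| ≤ M) (hc : |c| ≤ M) : |a * b - c * d| ≤ 2 * M * r :=
  calc |a * b - c * d| = |(a - c) * b + c * (b - d)| := by ring_nf
    _ ≤ |a - c| * |b| + |c| * |b - d| := by rw [← abs_mul, ← abs_mul]; exact abs_add_le _ _
    _ ≤ r * M + M * r := by gcongr <;> exact (abs_nonneg _).trans ‹_›
    _ = 2 * M * r := by ring

lemma abs_doubleSignedArea_sub_le {A B : Matrix (Fin 2) (Fin 3) ℝ} {M r : ℝ}
    (hA : ∀ i j, |A i j| ≤ M) (hB : ∀ i j, |B i j| ≤ M) (hAB : ∀ i j, |A i j - B i j| ≤ r) :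
    |doubleSignedArea A - doubleSignedArea B| ≤ 12 * M * r := by
  have hterm (j : Fin 3) : |(A 0 j * A 1 (j + 1) - A 1 j * A 0 (j + 1))
      - (B 0 j * B 1 (j + 1) - B 1 j * B 0 (j + 1))| ≤ 4 * M * r :=
    calc _ = |(A 0 j * A 1 (j + 1) - B 0 j * B 1 (j + 1))
          - (A 1 j * A 0 (j + 1) - B 1 j * B 0 (j + 1))| := by ring_nf
      _ ≤ 2 * M * r + 2 * M * r := (abs_sub _ _).trans <| add_le_add
          (abs_mul_sub_mul_le (hAB _ _) (hAB _ _) (hA _ _) (hB _ _))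
          (abs_mul_sub_mul_le (hAB _ _) (hAB _ _) (hA _ _) (hB _ _))
      _ = 4 * M * r := by ring
  calc |doubleSignedArea A - doubleSignedArea B|
      = |∑ j : Fin 3, ((A 0 j * A 1 (j + 1) - A 1 j * A 0 (j + 1))
          - (B 0 j * B 1 (j + 1) - B 1 j * B 0 (j + 1)))| := by
        rw [doubleSignedArea, doubleSignedArea, ← Finset.sum_sub_distrib]
    _ ≤ ∑ _j : Fin 3, 4 * M * r :=
        (Finset.abs_sum_le_sum_abs _ _).trans (Finset.sum_le_sum fun j _ => hterm j)
    _ = 12 * M * r := by rw [Finset.sum_const, Finset.card_univ, Fintype.card_fin]; ring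

def isoscelesTriangle (h : ℝ) : Fin 3 → Fin 2 → ℝ := ![![-1, 0], ![1, 0], ![0, h]]

lemma doubleSignedArea_isoscelesTriangle (h : ℝ) :
    doubleSignedArea (toMat (isoscelesTriangle h)) = 2 * h := by
  simp [doubleSignedArea, toMat, isoscelesTriangle, Fin.sum_univ_three, two_mul]

lemma abs_toMat_isoscelesTriangle_zero_le (i : Fin 2) (j : Fin 3) :
    |toMat (isoscelesTriangle 0) i j| ≤ 1 := by
  fin_cases i <;> fin_cases j <;> simp [toMat, isoscelesTriangle]

lemma abs_div_le_dE_isoscelesTriangle {h : ℝ} (h1 : |h| ≤ 1) :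
    |h| / 12 ≤ dE (toMat (isoscelesTriangle h)) (toMat (isoscelesTriangle 0)) := by
  refine le_dE fun P hP q => ?_
  set B := toMat (isoscelesTriangle 0)
  set A' := P * toMat (isoscelesTriangle h) + colMatR q
  set r := frobR (A' - B)
  have hr0 : 0 ≤ r := Real.sqrt_nonneg _
  have hdiff (i j) : |A' i j - B i j| ≤ r := abs_apply_le_frobR (A' - B) i j
  have hB (i j) : |B i j| ≤ 1 + r :=
    (abs_toMat_isoscelesTriangle_zero_le i j).trans (le_add_of_nonneg_right hr0)
  have hA' (i j) : |A' i j| ≤ 1 + r := by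
    have := abs_add_le (A' i j - B i j) (B i j)
    rw [sub_add_cancel] at this
    linarith [hdiff i j, abs_toMat_isoscelesTriangle_zero_le i j]
  have harea : 2 * |h| ≤ 12 * (1 + r) * r := by
    have := abs_doubleSignedArea_sub_le hA' hB hdiff
    rwa [doubleSignedArea_isoscelesTriangle, mul_zero, sub_zero,
      abs_doubleSignedArea_euclidean hP, doubleSignedArea_isoscelesTriangle, abs_mul,
      abs_two] at this
  rcases le_or_gt r 1 with hr | hr
  · nlinarith
  · linarith

lemma gammaMap_isoscelesTriangle (h : ℝ) :
    gammaMap (isoscelesTriangle h) = ![√(1 + h ^ 2), √(1 + h ^ 2), 2] := by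
  have hsqrt4 : √4 = 2 := by
    rw [show (4 : ℝ) = 2 ^ 2 by norm_num, Real.sqrt_sq zero_le_two]
  ext i
  fin_cases i <;>
    norm_num [gammaMap, eunorm, isoscelesTriangle, Fin.sum_univ_two, hsqrt4, cons_val_two]

lemma eunorm_gammaMap_isoscelesTriangle_sub_le (h : ℝ) :
    eunorm (gammaMap (isoscelesTriangle h) - gammaMap (isoscelesTriangle 0)) ≤ h ^ 2 := by
  set s := √(1 + h ^ 2)
  have hs : s ^ 2 = 1 + h ^ 2 := Real.sq_sqrt (by positivity)
  have hs1 : 1 ≤ s := Real.one_le_sqrt.mpr (by nlinarith)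
  have heq : eunorm (gammaMap (isoscelesTriangle h) - gammaMap (isoscelesTriangle 0))
      = √(2 * (s - 1) ^ 2) := by
    rw [gammaMap_isoscelesTriangle, gammaMap_isoscelesTriangle, eunorm, Fin.sum_univ_three]
    congr 1
    simp only [Pi.sub_apply, cons_val_zero, cons_val_one, cons_val_two, vecHead, vecTail,
      Function.comp_apply, Fin.succ_zero_eq_one, sub_self, ne_eq, OfNat.ofNat_ne_zero,
      not_false_eq_true, zero_pow, add_zero, Real.sqrt_one]
    ring
  -- `s - 1 = h² / (s + 1) ≤ h² / 2`
  rw [heq, Real.sqrt_le_left (sq_nonneg h)]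
  nlinarith

/-- The side-lengths map of triangles admits no lower Lipschitz bound for the orbit
distance `d_{E(2)}`: it is not bi-Lipschitz. -/
theorem stmt19 :
    ¬ ∃ C₁ : ℝ, 0 < C₁ ∧ ∀ a b : Fin 3 → Fin 2 → ℝ,
      C₁ * dE (toMat a) (toMat b) ≤ eunorm (gammaMap a - gammaMap b) := by
  rintro ⟨C, hC, hlip⟩
  set h := min 1 (C / 24)
  have hpos : 0 < h := lt_min one_pos (by positivity)
  have habs : |h| = h := abs_of_pos hpos
  have hdE := abs_div_le_dE_isoscelesTriangle (habs.trans_le (min_le_left _ _))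
  rw [habs] at hdE
  have hCh : C * (h / 12) ≤ h ^ 2 :=
    calc C * (h / 12)
        ≤ C * dE (toMat (isoscelesTriangle h)) (toMat (isoscelesTriangle 0)) :=
          mul_le_mul_of_nonneg_left hdE hC.le
      _ ≤ h ^ 2 := (hlip _ _).trans (eunorm_gammaMap_isoscelesTriangle_sub_le h)
  nlinarith [min_le_right 1 (C / 24)]
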